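/- arXiv:1306.2024 — 5 statements merged into one kernel-verified Lean document; each statement's English description precedes it below -/
import Mathlib

section
/- For every non-trivial ψ in the Schwartz space 𝓢(ℝ) (ψ not identically zero) and every integer n ≥ 2, there exists η ∈ 𝓢(ℝ) with all moments vanishing (∫_ℝ x^m η(x) dx = 0 for every m ∈ ℕ) such that the function ω ↦ conj(ψ̂(ω)) η̂(ω) |ω|^{−n} is Lebesgue integrable on ℝ and K_{ψ,η} := (2π)^{n−1} ∫_ℝ conj(ψ̂(ω)) η̂(ω) |ω|^{−n} dω is non-zero. -/
/-!
Since `ψ ≠ 0`, its Fourier transform does not vanish at some `ω₀ ≠ 0`. Take `η` with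
`η̂ = χ ψ̂` for a bump `χ ≥ 0` around `ω₀` whose support avoids the origin. Then `η̂` vanishes near
`0`, so every moment of `η`, being a derivative of `η̂` at `0`, vanishes; and the integrand
`χ |ψ̂|² |ω|⁻ⁿ` is non-negative, continuous, compactly supported and positive at `ω₀`, so
`K_{ψ,η} > 0`.
-/

open MeasureTheory Metric Filter Set
open scoped Real ComplexConjugate Manifold

noncomputable section

/-- Euclidean space ℝⁿ. -/
abbrev En (n : ℕ) := EuclideanSpace ℝ (Fin n)

/-- The unit sphere 𝕊^{n-1} of ℝⁿ, as a subtype. -/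
abbrev Sph (n : ℕ) := Metric.sphere (0 : En n) 1

/-- The surface measure on the sphere 𝕊^{n-1}. -/
def sphMeasure (n : ℕ) : Measure (Sph n) := (volume : Measure (En n)).toSphere

/-- 1D Fourier transform ĝ(ω) = ∫ g(x) e^{-i x ω} dx. -/
def FT1 (g : ℝ → ℂ) (ω : ℝ) : ℂ := ∫ x : ℝ, g x * Complex.exp (-(Complex.I * (x * ω : ℝ)))

/-- n-dimensional Fourier transform ĝ(w) = ∫ g(x) e^{-i x·w} dx. -/
def FTn {n : ℕ} (g : En n → ℂ) (w : En n) : ℂ :=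
  ∫ x : En n, g x * Complex.exp (-(Complex.I * (inner ℝ x w : ℝ)))

/-- The ridgelet ψ_{u,b,a}(x) = a⁻¹ ψ((x·u − b)/a). -/
def ridgelet {n : ℕ} (ψ : ℝ → ℂ) (u : Sph n) (b a : ℝ) (x : En n) : ℂ :=
  (a : ℂ)⁻¹ * ψ (((inner ℝ x (u : En n) : ℝ) - b) / a)

/-- The ridgelet transform R_ψ f(u,b,a) = ∫ f(x) conj(ψ_{u,b,a}(x)) dx. -/
def RT {n : ℕ} (ψ : ℝ → ℂ) (f : En n → ℂ) (u : Sph n) (b a : ℝ) : ℂ :=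
  ∫ x : En n, f x * conj (ridgelet ψ u b a x)

/-- K_{ψ,η} = (2π)^{n-1} ∫ conj(ψ̂(ω)) η̂(ω) |ω|^{-n} dω. -/
def Kconst (n : ℕ) (ψ η : ℝ → ℂ) : ℂ :=
  (((2 * π) ^ (n - 1) : ℝ) : ℂ) *
    ∫ ω : ℝ, conj (FT1 ψ ω) * FT1 η ω * ((|ω| ^ n : ℝ) : ℂ)⁻¹

/-- All moments vanish (Lizorkin condition on ℝ). -/
def Lizorkin1 (ψ : ℝ → ℂ) : Prop := ∀ m : ℕ, ∫ x : ℝ, (x : ℂ) ^ m * ψ x = 0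

/-- All moments vanish (Lizorkin condition on ℝⁿ). -/
def LizorkinN {n : ℕ} (φ : En n → ℂ) : Prop :=
  ∀ m : Fin n → ℕ, ∫ x : En n, (∏ i, (x i : ℂ) ^ m i) * φ x = 0

/-- The Radon transform Rf(u,p) = ∫_{u^⊥} f(pu + y) dy. -/
def Radon {n : ℕ} (f : En n → ℂ) (u : Sph n) (p : ℝ) : ℂ :=
  ∫ y : ((ℝ ∙ (u : En n))ᗮ : Submodule ℝ (En n)), f (p • (u : En n) + y)

/-- The 1D wavelet transform W_ψ g(b,a) = ∫ g(p) a⁻¹ conj(ψ((p−b)/a)) dp. -/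
def WT (ψ : ℝ → ℂ) (g : ℝ → ℂ) (b a : ℝ) : ℂ :=
  ∫ p : ℝ, g p * ((a : ℂ)⁻¹ * conj (ψ ((p - b) / a)))

/-- Rapid decay of a function Φ on 𝕊^{n-1}×ℝ×(0,∞) (arguments ordered (u,b,a)). -/
structure RapidDecay {n : ℕ} (Φ : Sph n → ℝ → ℝ → ℂ) : Prop where
  cont : ContinuousOn (fun q : Sph n × ℝ × ℝ => Φ q.1 q.2.1 q.2.2)
    (univ ×ˢ univ ×ˢ Ioi (0 : ℝ))
  decay : ∀ s r : ℕ, ∃ C : ℝ, ∀ (u : Sph n) (b : ℝ) (a : ℝ), 0 < a →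
    (a ^ s + (a ^ s)⁻¹) * (1 + b ^ 2) ^ ((r : ℝ) / 2) * ‖Φ u b a‖ ≤ C

/-- The ridgelet synthesis operator
R^t_ψ Φ(x) = ∫_{𝕊^{n-1}} ∫₀^∞ ∫_ℝ Φ(u,b,a) ψ_{u,b,a}(x) a^{−n} db da du. -/
def RTsynth {n : ℕ} (ψ : ℝ → ℂ) (Φ : Sph n → ℝ → ℝ → ℂ) (x : En n) : ℂ :=
  ∫ u : Sph n, (∫ a in Ioi (0:ℝ), (∫ b : ℝ, Φ u b a * ridgelet ψ u b a x * ((a ^ n : ℝ) : ℂ)⁻¹))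
    ∂(sphMeasure n)

/-- The seminorm ρ_ν(φ) = sup_{x, m ≤ ν} (1+|x|)^ν ‖∂^m φ(x)‖. -/
def rho {E : Type*} [NormedAddCommGroup E] [NormedSpace ℝ E] (ν : ℕ) (φ : E → ℂ) : ℝ :=
  ⨆ q : E × Fin (ν + 1), (1 + ‖q.1‖) ^ ν * ‖iteratedFDeriv ℝ q.2.1 φ q.1‖

open Complex FourierTransform SchwartzMap Topology

lemma FT1_eq_fourier (g : ℝ → ℂ) (ω : ℝ) : FT1 g ω = 𝓕 g (ω / (2 * π)) := by
  rw [FT1, Real.fourier_real_eq_integral_exp_smul]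
  congr 1 with x
  have : -2 * π * x * (ω / (2 * π)) = -(x * ω) := by field_simp
  rw [smul_eq_mul, mul_comm, this]
  push_cast
  ring_nf

lemma continuous_FT1 (ψ : 𝓢(ℝ, ℂ)) : Continuous (FT1 ψ) := by
  simp_rw [funext (FT1_eq_fourier ψ), ← fourier_coe]
  fun_prop

lemma exists_FT1_ne_zero {ψ : 𝓢(ℝ, ℂ)} (hψ : ψ ≠ 0) : ∃ ω ≠ 0, FT1 ψ ω ≠ 0 := by
  by_contra! h
  have hfourier : ((𝓕 ψ : 𝓢(ℝ, ℂ)) : ℝ → ℂ) = 0 := by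
    refine Continuous.ext_on (dense_compl_singleton 0) (𝓕 ψ).continuous continuous_const
      fun ξ hξ => ?_
    have := h (ξ * (2 * π)) (mul_ne_zero hξ (by positivity))
    rwa [FT1_eq_fourier, mul_div_cancel_right₀ _ (by positivity)] at this
  have : (𝓕 ψ : 𝓢(ℝ, ℂ)) = 0 := DFunLike.coe_injective hfourier
  exact hψ (by simpa using congrArg 𝓕⁻ this)

lemma exists_FT1_eq_mul (ψ : 𝓢(ℝ, ℂ)) {χ : ℝ → ℝ} (hχ : χ.HasTemperateGrowth) :
    ∃ η : 𝓢(ℝ, ℂ), ∀ ω, FT1 η ω = χ ω * FT1 ψ ω := by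
  have hχ' : (χ ∘ fun ξ : ℝ => 2 * π * ξ).HasTemperateGrowth := hχ.comp (by fun_prop)
  refine ⟨𝓕⁻ (smulLeftCLM ℂ (χ ∘ fun ξ : ℝ => 2 * π * ξ) (𝓕 ψ)), fun ω => ?_⟩
  rw [FT1_eq_fourier, FT1_eq_fourier, ← fourier_coe, fourier_fourierInv_eq,
    smulLeftCLM_apply_apply hχ', fourier_coe, Function.comp_apply,
    mul_div_cancel₀ _ (by positivity), real_smul]

lemma iteratedDeriv_fourier_zero (η : 𝓢(ℝ, ℂ)) (m : ℕ) :
    iteratedDeriv m (𝓕 (η : ℝ → ℂ)) 0 = (-2 * π * I) ^ m * ∫ x : ℝ, (x : ℂ) ^ m * η x := by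
  have hmoments (k : ℕ) : Integrable (fun x : ℝ => x ^ k • η x) := by
    have hk : (fun x : ℝ => x ^ k).HasTemperateGrowth := by fun_prop
    simpa [smulLeftCLM_apply hk] using (smulLeftCLM ℂ (fun x : ℝ => x ^ k) η).integrable
  rw [Real.iteratedDeriv_fourier (N := m) (fun k _ => hmoments k) le_rfl, Real.fourier_real_eq,
    ← integral_const_mul]
  congr 1 with x
  simp only [mul_zero, neg_mul, neg_zero, AddChar.map_zero_eq_one, one_smul, smul_eq_mul]
  ring

lemma lizorkin1_of_FT1_eventuallyEq_zero {η : 𝓢(ℝ, ℂ)} (h : FT1 η =ᶠ[𝓝 0] 0) :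
    Lizorkin1 η := by
  have hfourier : 𝓕 (η : ℝ → ℂ) =ᶠ[𝓝 0] 0 := by
    have hscale : Tendsto (fun ξ : ℝ => 2 * π * ξ) (𝓝 0) (𝓝 0) := by
      simpa using (continuous_const_mul (2 * π)).tendsto 0
    filter_upwards [h.comp_tendsto hscale] with ξ hξ
    rwa [Function.comp_apply, FT1_eq_fourier, mul_div_cancel_left₀ _ (by positivity)] at hξ
  intro m
  have := iteratedDeriv_fourier_zero η m
  rw [hfourier.iteratedDeriv_eq] at this
  simpa [Real.pi_ne_zero] using this.symm

lemma continuous_mul_inv_abs_pow {f : ℝ → ℝ} (hf : Continuous f) (h0 : 0 ∉ tsupport f) (n : ℕ) :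
    Continuous fun x => f x * (|x| ^ n)⁻¹ := by
  refine ContinuousOn.continuous_of_tsupport_subset (s := {0}ᶜ) ?_ isOpen_compl_singleton ?_
  · exact hf.continuousOn.mul
      ((continuousOn_id.abs.pow n).inv₀ fun x hx => pow_ne_zero n (abs_ne_zero.2 hx))
  · exact (tsupport_mul_subset_left).trans fun x hx => by rintro rfl; exact h0 hx

theorem existence_reconstruction_neuronal_activation_general
    (n : ℕ) (ψ : SchwartzMap ℝ ℂ) (hψ : ∃ x : ℝ, ψ x ≠ 0) :
    ∃ η : SchwartzMap ℝ ℂ, Lizorkin1 ⇑η ∧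
      Integrable (fun ω : ℝ => conj (FT1 ⇑ψ ω) * FT1 ⇑η ω * ((|ω| ^ n : ℝ) : ℂ)⁻¹) ∧
      Kconst n ⇑ψ ⇑η ≠ 0 := by
  obtain ⟨ω₀, hω₀, hψω₀⟩ := exists_FT1_ne_zero (ψ := ψ) fun h => by simp [h] at hψ
  let χ : ContDiffBump ω₀ := ⟨|ω₀| / 4, |ω₀| / 2, by positivity, by linarith [abs_pos.2 hω₀]⟩
  have hχ0 : 0 ∉ tsupport χ := by
    rw [χ.tsupport_eq, mem_closedBall, dist_zero_left, Real.norm_eq_abs, not_le]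
    exact half_lt_self (abs_pos.2 hω₀)
  have hχω₀ : χ ω₀ = 1 := χ.one_of_mem_closedBall (mem_closedBall_self χ.rIn_pos.le)
  obtain ⟨η, hη⟩ := exists_FT1_eq_mul ψ (χ.hasCompactSupport.hasTemperateGrowth χ.contDiff)
  set F : ℝ → ℝ := fun ω => χ ω * (|ω| ^ n)⁻¹ * normSq (FT1 ψ ω)
  have hF : (fun ω => conj (FT1 ψ ω) * FT1 η ω * ((|ω| ^ n : ℝ) : ℂ)⁻¹) = fun ω => (F ω : ℂ) := by
    ext ω
    simp only [F, hη]
    push_cast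
    rw [normSq_eq_conj_mul_self]
    ring
  have hFcont : Continuous F :=
    (continuous_mul_inv_abs_pow χ.continuous hχ0 n).mul (continuous_normSq.comp (continuous_FT1 ψ))
  have hFsupp : HasCompactSupport F := χ.hasCompactSupport.mul_right.mul_right
  have hFpos : 0 < ∫ ω, F ω :=
    hFcont.integral_pos_of_hasCompactSupport_nonneg_nonzero hFsupp
      (fun ω => mul_nonneg (mul_nonneg χ.nonneg (by positivity)) (normSq_nonneg _))
      (x := ω₀) (by simp [F, hχω₀, hω₀, hψω₀])
  refine ⟨η, lizorkin1_of_FT1_eventuallyEq_zero ?_, ?_, ?_⟩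
  · filter_upwards [notMem_tsupport_iff_eventuallyEq.mp hχ0] with ω hω
    simp [hη, hω]
  · exact hF ▸ (hFcont.integrable_of_hasCompactSupport hFsupp).ofReal
  · rw [Kconst, hF, integral_complex_ofReal]
    exact mul_ne_zero (ofReal_ne_zero.2 (by positivity)) (ofReal_ne_zero.2 hFpos.ne')

/-- every non-trivial ψ ∈ 𝓢(ℝ) admits a reconstruction neuronal activation
function η ∈ 𝓢₀(ℝ) (all moments vanishing) with the defining integral absolutely convergent
and K_{ψ,η} ≠ 0. -/
theorem existence_reconstruction_neuronal_activation
    (n : ℕ) (hn : 2 ≤ n) (ψ : SchwartzMap ℝ ℂ) (hψ : ∃ x : ℝ, ψ x ≠ 0) :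
    ∃ η : SchwartzMap ℝ ℂ, Lizorkin1 ⇑η ∧
      Integrable (fun ω : ℝ => conj (FT1 ⇑ψ ω) * FT1 ⇑η ω * ((|ω| ^ n : ℝ) : ℂ)⁻¹) ∧
      Kconst n ⇑ψ ⇑η ≠ 0 :=
  existence_reconstruction_neuronal_activation_general n ψ hψ
end
end

section
/- Let ψ ∈ 𝓢(ℝ), let f ∈ L¹(ℝⁿ), and let Φ : 𝕊^{n-1}×ℝ×(0,∞) → ℂ have rapid decay. Then both of the following integrals converge absolutely and are equal: ∫_{ℝⁿ} f(x) · R^t_ψ Φ(x) dx = ∫_{𝕊^{n-1}} ∫₀^∞ ∫_ℝ R_{conj(ψ)} f(u,b,a) · Φ(u,b,a) · a^{−n} db da du, where R_{conj(ψ)} f(u,b,a) = ∫_{ℝⁿ} f(x) ψ_{u,b,a}(x) dx. -/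
open MeasureTheory Metric Filter Set
open scoped Real ComplexConjugate Manifold

noncomputable section

/-!
Rapid decay of `Φ` and boundedness of `ψ` give
`|Φ(u,b,a) ψ_{u,b,a}(x) a⁻ⁿ| ≤ C (1 + a²)⁻¹ (1 + b²)⁻¹` uniformly in `x`. Since the sphere has
finite measure and `f ∈ L¹`, the integrand `f(x) Φ(u,b,a) ψ_{u,b,a}(x) a⁻ⁿ` is integrable on
`(𝕊^{n-1} × (0,∞) × ℝ) × ℝⁿ`, and Fubini's theorem yields both integrability claims and the
exchange of the `x`-integral with the `(u,a,b)`-integral.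
-/

instance (n : ℕ) : IsFiniteMeasure (sphMeasure n) := by
  unfold sphMeasure
  infer_instance

lemma one_add_sq_le_two_mul_pow_mul (k : ℕ) {a : ℝ} (ha : 0 < a) :
    1 + a ^ 2 ≤ 2 * a ^ k * (a ^ (k + 2) + (a ^ (k + 2))⁻¹) := by
  have h : a ^ k * (a ^ (k + 2) + (a ^ (k + 2))⁻¹) = a ^ (2 * k + 2) + (a ^ 2)⁻¹ := by
    field_simp
    ring
  rw [mul_assoc, h]
  rcases le_total a 1 with ha1 | ha1
  · have hsq : a ^ 2 ≤ 1 := pow_le_one₀ ha.le ha1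
    have hinv : 1 ≤ (a ^ 2)⁻¹ := one_le_inv₀ (by positivity) |>.2 hsq
    have : 0 ≤ a ^ (2 * k + 2) := by positivity
    linarith
  · have hsq : a ^ 2 ≤ a ^ (2 * k + 2) := pow_le_pow_right₀ ha1 (by omega)
    have hone : 1 ≤ a ^ (2 * k + 2) := one_le_pow₀ ha1
    have : 0 ≤ (a ^ 2)⁻¹ := by positivity
    linarith

namespace RapidDecay

variable {n : ℕ} {Φ : Sph n → ℝ → ℝ → ℂ}

theorem exists_norm_div_pow_le (hΦ : RapidDecay Φ) (k : ℕ) :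
    ∃ C, ∀ u b a, 0 < a → ‖Φ u b a‖ / a ^ k ≤ C * ((1 + a ^ 2)⁻¹ * (1 + b ^ 2)⁻¹) := by
  obtain ⟨C, hC⟩ := hΦ.decay (k + 2) 2
  refine ⟨2 * C, fun u b a ha => ?_⟩
  have hCuba := hC u b a ha
  rw [show ((2 : ℕ) : ℝ) / 2 = 1 by norm_num, Real.rpow_one] at hCuba
  have hw := one_add_sq_le_two_mul_pow_mul k ha
  have hak : 0 < a ^ k := pow_pos ha k
  rw [div_le_iff₀ hak]
  calc ‖Φ u b a‖ = (1 + a ^ 2) * (1 + b ^ 2) * ‖Φ u b a‖ * ((1 + a ^ 2)⁻¹ * (1 + b ^ 2)⁻¹) := by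
        field_simp
    _ ≤ 2 * a ^ k * (a ^ (k + 2) + (a ^ (k + 2))⁻¹) * (1 + b ^ 2) * ‖Φ u b a‖
          * ((1 + a ^ 2)⁻¹ * (1 + b ^ 2)⁻¹) := by gcongr
    _ = 2 * ((a ^ (k + 2) + (a ^ (k + 2))⁻¹) * (1 + b ^ 2) * ‖Φ u b a‖)
          * ((1 + a ^ 2)⁻¹ * (1 + b ^ 2)⁻¹) * a ^ k := by ring
    _ ≤ 2 * C * ((1 + a ^ 2)⁻¹ * (1 + b ^ 2)⁻¹) * a ^ k := by gcongr

end RapidDecay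

section RidgeletMeasure

variable {X : Type*} [MeasurableSpace X] (μ : Measure X)

/-- The measure `du da db` on `X × (0,∞) × ℝ`; points are `q = (u, a, b)`, scale before shift. -/
abbrev ridgeletMeasure : Measure (X × ℝ × ℝ) :=
  μ.prod ((volume.restrict (Ioi 0)).prod volume)

theorem ridgeletMeasure_eq_restrict [SFinite μ] :
    ridgeletMeasure μ = (μ.prod (volume.prod volume)).restrict (univ ×ˢ Ioi 0 ×ˢ univ) := by
  rw [← Measure.prod_restrict, ← Measure.prod_restrict, Measure.restrict_univ,
    Measure.restrict_univ]

theorem ae_ridgeletMeasure_pos [SFinite μ] : ∀ᵐ q ∂ridgeletMeasure μ, 0 < q.2.1 := by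
  rw [ridgeletMeasure_eq_restrict]
  filter_upwards [ae_restrict_mem (MeasurableSet.univ.prod (measurableSet_Ioi.prod
    MeasurableSet.univ))] with q hq using hq.2.1

theorem integral_ridgeletMeasure [SFinite μ] {E : Type*} [NormedAddCommGroup E] [NormedSpace ℝ E]
    {g : X × ℝ × ℝ → E} (hg : Integrable g (ridgeletMeasure μ)) :
    ∫ q, g q ∂ridgeletMeasure μ = ∫ u, (∫ a in Ioi 0, ∫ b, g (u, a, b)) ∂μ := by
  rw [integral_prod _ hg]
  refine integral_congr_ae ?_
  filter_upwards [hg.prod_right_ae] with u hu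
  exact integral_prod _ hu

theorem integrable_inv_one_add_sq_mul_inv_one_add_sq [IsFiniteMeasure μ] :
    Integrable (fun q : X × ℝ × ℝ => (1 + q.2.1 ^ 2)⁻¹ * (1 + q.2.2 ^ 2)⁻¹)
      (ridgeletMeasure μ) := by
  simpa only [one_mul] using (integrable_const (1 : ℝ)).mul_prod
    (integrable_inv_one_add_sq.restrict.mul_prod integrable_inv_one_add_sq)

end RidgeletMeasure

section SynthKernel

variable {n : ℕ} {ψ : ℝ → ℂ} {Φ : Sph n → ℝ → ℝ → ℂ}

/-- The integrand of `RTsynth ψ Φ x` at `q = (u, a, b)`. -/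
def synthKernel (ψ : ℝ → ℂ) (Φ : Sph n → ℝ → ℝ → ℂ) (q : Sph n × ℝ × ℝ) (x : En n) : ℂ :=
  Φ q.1 q.2.2 q.2.1 * ridgelet ψ q.1 q.2.2 q.2.1 x * ((q.2.1 ^ n : ℝ) : ℂ)⁻¹

theorem norm_synthKernel_le {M : ℝ} (hψ : ∀ t, ‖ψ t‖ ≤ M) {q : Sph n × ℝ × ℝ}
    (ha : 0 < q.2.1) (x : En n) :
    ‖synthKernel ψ Φ q x‖ ≤ M * (‖Φ q.1 q.2.2 q.2.1‖ / q.2.1 ^ (n + 1)) := by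
  obtain ⟨u, a, b⟩ := q
  simp only at ha ⊢
  simp only [synthKernel, ridgelet, norm_mul, norm_inv, Complex.norm_real, Real.norm_eq_abs,
    abs_of_pos ha, abs_of_pos (pow_pos ha n)]
  calc ‖Φ u b a‖ * (a⁻¹ * ‖ψ ((inner ℝ x ↑u - b) / a)‖) * (a ^ n)⁻¹
      ≤ ‖Φ u b a‖ * (a⁻¹ * M) * (a ^ n)⁻¹ := by gcongr; exact hψ _
    _ = M * (‖Φ u b a‖ / a ^ (n + 1)) := by
      rw [pow_succ]
      field_simp

theorem RapidDecay.continuousOn_synthKernel (hΦ : RapidDecay Φ) (hψ : Continuous ψ) :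
    ContinuousOn (fun p : (Sph n × ℝ × ℝ) × En n => synthKernel ψ Φ p.1 p.2)
      ((univ ×ˢ Ioi 0 ×ˢ univ) ×ˢ univ) := by
  have ha : ∀ p ∈ ((univ : Set (Sph n)) ×ˢ Ioi (0 : ℝ) ×ˢ (univ : Set ℝ)) ×ˢ (univ : Set (En n)),
      p.1.2.1 ≠ 0 := fun p hp => hp.1.2.1.ne'
  have hΦc : ContinuousOn (fun p : (Sph n × ℝ × ℝ) × En n => Φ p.1.1 p.1.2.2 p.1.2.1)
      ((univ ×ˢ Ioi 0 ×ˢ univ) ×ˢ univ) :=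
    hΦ.cont.comp (f := fun p : (Sph n × ℝ × ℝ) × En n => (p.1.1, p.1.2.2, p.1.2.1))
      (by fun_prop) fun p hp => ⟨mem_univ _, mem_univ _, hp.1.2.1⟩
  unfold synthKernel ridgelet
  refine (hΦc.mul (ContinuousOn.mul ?_ ?_)).mul ?_
  · exact (Continuous.continuousOn (by fun_prop)).inv₀ fun p hp => by exact_mod_cast ha p hp
  · exact hψ.comp_continuousOn ((Continuous.continuousOn (by fun_prop)).div
      (Continuous.continuousOn (by fun_prop)) ha)
  · exact (Continuous.continuousOn (by fun_prop)).inv₀ fun p hp => by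
      exact_mod_cast pow_ne_zero n (ha p hp)

variable (μ : Measure (Sph n))

theorem RapidDecay.aestronglyMeasurable_synthKernel [SFinite μ] (hΦ : RapidDecay Φ)
    (hψ : Continuous ψ) :
    AEStronglyMeasurable (fun p : (Sph n × ℝ × ℝ) × En n => synthKernel ψ Φ p.1 p.2)
      ((ridgeletMeasure μ).prod volume) := by
  rw [ridgeletMeasure_eq_restrict, Measure.restrict_prod_eq_prod_univ]
  exact (hΦ.continuousOn_synthKernel hψ).aestronglyMeasurable
    ((MeasurableSet.univ.prod (measurableSet_Ioi.prod MeasurableSet.univ)).prod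
      MeasurableSet.univ)

theorem RapidDecay.aestronglyMeasurable_synthKernel_left [SFinite μ] (hΦ : RapidDecay Φ)
    (hψ : Continuous ψ) (x : En n) :
    AEStronglyMeasurable (fun q => synthKernel ψ Φ q x) (ridgeletMeasure μ) := by
  rw [ridgeletMeasure_eq_restrict]
  exact ((hΦ.continuousOn_synthKernel hψ).comp (f := fun q => (q, x)) (by fun_prop)
    fun q hq => ⟨hq, mem_univ x⟩).aestronglyMeasurable
      (MeasurableSet.univ.prod (measurableSet_Ioi.prod MeasurableSet.univ))

theorem RapidDecay.exists_integrable_bound_synthKernel [IsFiniteMeasure μ] (hΦ : RapidDecay Φ)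
    {M : ℝ} (hψ : ∀ t, ‖ψ t‖ ≤ M) :
    ∃ G : Sph n × ℝ × ℝ → ℝ, Integrable G (ridgeletMeasure μ) ∧
      ∀ᵐ q ∂ridgeletMeasure μ, ∀ x, ‖synthKernel ψ Φ q x‖ ≤ G q := by
  obtain ⟨C, hC⟩ := hΦ.exists_norm_div_pow_le (n + 1)
  have hM : 0 ≤ M := (norm_nonneg _).trans (hψ 0)
  refine ⟨fun q => M * (C * ((1 + q.2.1 ^ 2)⁻¹ * (1 + q.2.2 ^ 2)⁻¹)),
    ((integrable_inv_one_add_sq_mul_inv_one_add_sq μ).const_mul C).const_mul M, ?_⟩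
  filter_upwards [ae_ridgeletMeasure_pos μ] with q hq x
  exact (norm_synthKernel_le hψ hq x).trans (mul_le_mul_of_nonneg_left (hC _ _ _ hq) hM)

variable [IsFiniteMeasure μ] {M : ℝ}

theorem RapidDecay.integrable_synthKernel (hΦ : RapidDecay Φ) (hψc : Continuous ψ)
    (hψ : ∀ t, ‖ψ t‖ ≤ M) (x : En n) :
    Integrable (fun q => synthKernel ψ Φ q x) (ridgeletMeasure μ) := by
  obtain ⟨G, hG, hbound⟩ := hΦ.exists_integrable_bound_synthKernel μ hψ
  exact hG.mono' (hΦ.aestronglyMeasurable_synthKernel_left μ hψc x)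
    (hbound.mono fun q hq => hq x)

theorem RapidDecay.integrable_mul_synthKernel (hΦ : RapidDecay Φ) (hψc : Continuous ψ)
    (hψ : ∀ t, ‖ψ t‖ ≤ M) {f : En n → ℂ} (hf : Integrable f) :
    Integrable (fun p : (Sph n × ℝ × ℝ) × En n => f p.2 * synthKernel ψ Φ p.1 p.2)
      ((ridgeletMeasure μ).prod volume) := by
  obtain ⟨G, hG, hbound⟩ := hΦ.exists_integrable_bound_synthKernel μ hψ
  refine (hG.mul_prod hf.norm).mono'
    ((hf.1.comp_quasiMeasurePreserving Measure.quasiMeasurePreserving_snd).mul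
      (hΦ.aestronglyMeasurable_synthKernel μ hψc)) ?_
  filter_upwards [Measure.quasiMeasurePreserving_fst.ae hbound] with p hp
  rw [norm_mul, mul_comm]
  exact mul_le_mul_of_nonneg_right (hp p.2) (norm_nonneg _)

theorem RapidDecay.RTsynth_eq_integral_synthKernel (hΦ : RapidDecay Φ) (hψc : Continuous ψ)
    (hψ : ∀ t, ‖ψ t‖ ≤ M) (x : En n) :
    RTsynth ψ Φ x = ∫ q, synthKernel ψ Φ q x ∂ridgeletMeasure (sphMeasure n) :=
  (integral_ridgeletMeasure _ (hΦ.integrable_synthKernel _ hψc hψ x)).symm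

end SynthKernel

theorem ridgelet_synthesis_transpose_general
    (n : ℕ) (ψ : SchwartzMap ℝ ℂ)
    (f : En n → ℂ) (hf : Integrable f)
    (Φ : Sph n → ℝ → ℝ → ℂ) (hΦ : RapidDecay Φ) :
    Integrable (fun x : En n => f x * RTsynth ⇑ψ Φ x) ∧
    Integrable (fun q : Sph n × ℝ × ℝ =>
        (∫ x : En n, f x * ridgelet ⇑ψ q.1 q.2.2 q.2.1 x) * Φ q.1 q.2.2 q.2.1
          * ((q.2.1 ^ n : ℝ) : ℂ)⁻¹)
      ((sphMeasure n).prod ((volume.restrict (Ioi (0:ℝ))).prod volume)) ∧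
    ∫ x : En n, f x * RTsynth ⇑ψ Φ x =
      ∫ u : Sph n, (∫ a in Ioi (0:ℝ),
        (∫ b : ℝ, (∫ x : En n, f x * ridgelet ⇑ψ u b a x) * Φ u b a * ((a ^ n : ℝ) : ℂ)⁻¹))
        ∂(sphMeasure n) := by
  have hψ : ∀ t, ‖ψ t‖ ≤ SchwartzMap.seminorm ℝ 0 0 ψ := ψ.norm_le_seminorm ℝ
  have hF := hΦ.integrable_mul_synthKernel (sphMeasure n) ψ.continuous hψ hf
  have hRTsynth (x : En n) :
      f x * RTsynth ψ Φ x = ∫ q, f x * synthKernel ψ Φ q x ∂ridgeletMeasure (sphMeasure n) := by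
    rw [hΦ.RTsynth_eq_integral_synthKernel ψ.continuous hψ, integral_const_mul]
  have hRT (q : Sph n × ℝ × ℝ) : ∫ x, f x * synthKernel ψ Φ q x =
      (∫ x, f x * ridgelet ψ q.1 q.2.2 q.2.1 x) * Φ q.1 q.2.2 q.2.1 * ((q.2.1 ^ n : ℝ) : ℂ)⁻¹ := by
    simp only [synthKernel, mul_assoc, ← integral_mul_const]
    congr 1 with x
    ring
  have hRTint := hF.integral_prod_left.congr (ae_of_all _ hRT)
  refine ⟨hF.integral_prod_right.congr (ae_of_all _ fun x => (hRTsynth x).symm), hRTint, ?_⟩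
  rw [← integral_ridgeletMeasure _ hRTint]
  simp only [hRTsynth, ← hRT]
  exact (integral_integral_swap hF).symm

/-- duality between the ridgelet transform and the ridgelet synthesis operator:
both integrals converge absolutely and
∫ f(x) R^t_ψΦ(x) dx = ∫_{𝕊^{n-1}} ∫₀^∞ ∫_ℝ R_{conj(ψ)}f(u,b,a) Φ(u,b,a) a^{−n} db da du,
where R_{conj(ψ)}f(u,b,a) = ∫ f(x) ψ_{u,b,a}(x) dx. -/
theorem ridgelet_synthesis_transpose
    (n : ℕ) (hn : 2 ≤ n) (ψ : SchwartzMap ℝ ℂ)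
    (f : En n → ℂ) (hf : Integrable f)
    (Φ : Sph n → ℝ → ℝ → ℂ) (hΦ : RapidDecay Φ) :
    Integrable (fun x : En n => f x * RTsynth ⇑ψ Φ x) ∧
    Integrable (fun q : Sph n × ℝ × ℝ =>
        (∫ x : En n, f x * ridgelet ⇑ψ q.1 q.2.2 q.2.1 x) * Φ q.1 q.2.2 q.2.1
          * ((q.2.1 ^ n : ℝ) : ℂ)⁻¹)
      ((sphMeasure n).prod ((volume.restrict (Ioi (0:ℝ))).prod volume)) ∧
    ∫ x : En n, f x * RTsynth ⇑ψ Φ x =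
      ∫ u : Sph n, (∫ a in Ioi (0:ℝ),
        (∫ b : ℝ, (∫ x : En n, f x * ridgelet ⇑ψ u b a x) * Φ u b a * ((a ^ n : ℝ) : ℂ)⁻¹))
        ∂(sphMeasure n) :=
  ridgelet_synthesis_transpose_general n ψ f hf Φ hΦ
end
end

section
/- For every integer s ≥ 1 there exists C > 0 such that for all φ ∈ 𝓢₀(ℝⁿ), all ψ ∈ 𝓢(ℝ), and all (u,b,a) ∈ 𝕊^{n-1}×ℝ×(0,∞): a^s |R_ψ φ(u,b,a)| ≤ C ρ_{s+n}(φ) ρ_{s+1}(ψ). -/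
open MeasureTheory Metric Filter Set
open scoped Real ComplexConjugate Manifold

noncomputable section

/-! Since all moments of `φ` vanish, `φ` is orthogonal to every polynomial in `x`, in particular
to `x ↦ P ((x·u − b)/a)` for the Taylor polynomial `P` of `conj ψ` of degree `s − 1` at `−b/a`.
After subtracting it, the integrand is bounded by `2 sup |ψ^(s−1)| · (‖x‖/a)^(s−1) · ‖φ x‖`;
with the factor `a⁻¹` of the ridgelet this gives `a^(-s)` times `∫ ‖x‖^(s−1) ‖φ x‖`, which the decay
of order `s + n` of `φ` bounds. -/

section Rho

variable {E : Type*} [NormedAddCommGroup E] [NormedSpace ℝ E]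

lemma le_rho {ν k : ℕ} (hk : k ≤ ν) (φ : SchwartzMap E ℂ) (x : E) :
    (1 + ‖x‖) ^ ν * ‖iteratedFDeriv ℝ k φ x‖ ≤ rho ν φ := by
  refine le_ciSup (f := fun q : E × Fin (ν + 1) =>
    (1 + ‖q.1‖) ^ ν * ‖iteratedFDeriv ℝ q.2.1 φ q.1‖) ⟨2 ^ ν * (Finset.Iic (ν, ν)).sup
      (schwartzSeminormFamily ℝ E ℂ) φ, ?_⟩ (x, ⟨k, Nat.lt_succ_of_le hk⟩)
  rintro r ⟨q, rfl⟩
  exact SchwartzMap.one_add_le_sup_seminorm_apply (𝕜 := ℝ) (m := (ν, ν)) le_rfl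
    (Nat.lt_succ_iff.mp q.2.2) φ q.1

lemma rho_nonneg (ν : ℕ) (φ : SchwartzMap E ℂ) : 0 ≤ rho ν φ :=
  le_trans (by positivity) (le_rho (Nat.zero_le ν) φ 0)

lemma norm_iteratedFDeriv_le_rho {ν k : ℕ} (hk : k ≤ ν) (φ : SchwartzMap E ℂ) (x : E) :
    ‖iteratedFDeriv ℝ k φ x‖ ≤ rho ν φ :=
  le_trans (le_mul_of_one_le_left (norm_nonneg _) (one_le_pow₀ (by simp)))
    (le_rho hk φ x)

lemma pow_mul_norm_le_rho (m : ℕ) {k : ℕ} (φ : SchwartzMap E ℂ) (x : E) :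
    ‖x‖ ^ m * ‖φ x‖ ≤ rho (m + k) φ * ((1 + ‖x‖) ^ (-(k : ℝ))) := by
  have h1 : 0 < 1 + ‖x‖ := by positivity
  rw [Real.rpow_neg h1.le, Real.rpow_natCast, ← div_eq_mul_inv, le_div_iff₀ (by positivity)]
  calc ‖x‖ ^ m * ‖φ x‖ * (1 + ‖x‖) ^ k ≤ (1 + ‖x‖) ^ m * (1 + ‖x‖) ^ k * ‖φ x‖ := by
        rw [mul_right_comm]; gcongr; simp
    _ ≤ rho (m + k) φ := by
        simpa [← pow_add] using le_rho (Nat.zero_le (m + k)) φ x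

end Rho

/-- The factor `2` comes from the base case `‖g t - g c‖ ≤ 2 M`: the polynomial has degree `m`,
one more than the bound on the `m`-th derivative pays for. -/
theorem norm_sub_taylorWithinEval_le {E : Type*} [NormedAddCommGroup E] [NormedSpace ℝ E]
    {m : ℕ} {g : ℝ → E} (hg : ContDiff ℝ m g) {M : ℝ} (hM : ∀ y, ‖iteratedDeriv m g y‖ ≤ M)
    (c t : ℝ) : ‖g t - taylorWithinEval g m univ c t‖ ≤ 2 * M * |t - c| ^ m := by
  induction m generalizing g t with
  | zero =>
    simp only [iteratedDeriv_zero] at hM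
    simpa [two_mul] using (norm_sub_le _ _).trans (add_le_add (hM t) (hM c))
  | succ m ih =>
    obtain ⟨hdiff, -, hg'⟩ :=
      contDiff_succ_iff_deriv (n := (m : WithTop ℕ∞)).mp (by exact_mod_cast hg)
    have hderiv : ∀ y, HasDerivAt (fun y => g y - taylorWithinEval g (m + 1) univ c y)
        (deriv g y - taylorWithinEval (deriv g) m univ c y) y := fun y => by
      have := (hdiff y).hasDerivAt.sub
        (hasDerivAt_taylorWithinEval_succ (x₀ := c) (s := univ) g m)
      rwa [derivWithin_univ] at this
    have hbound : ∀ y ∈ uIcc c t,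
        ‖deriv g y - taylorWithinEval (deriv g) m univ c y‖ ≤ 2 * M * |t - c| ^ m := by
      intro y hy
      refine (ih hg' (fun z => ?_) y).trans ?_
      · simpa [iteratedDeriv_succ'] using hM z
      · have hM0 : 0 ≤ M := (norm_nonneg _).trans (hM c)
        exact mul_le_mul_of_nonneg_left
          (pow_le_pow_left₀ (abs_nonneg _) (abs_sub_left_of_mem_uIcc hy) m) (by linarith)
    have := (convex_uIcc c t).norm_image_sub_le_of_norm_hasDerivWithin_le
      (fun y _ => (hderiv y).hasDerivWithinAt) hbound left_mem_uIcc right_mem_uIcc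
    simpa [Real.norm_eq_abs, pow_succ, mul_assoc] using this

lemma SchwartzMap.integrable_mul_of_norm_le_pow {D : Type*} [NormedAddCommGroup D]
    [NormedSpace ℝ D] [MeasurableSpace D] [BorelSpace D] [SecondCountableTopology D]
    {μ : Measure D} [μ.HasTemperateGrowth] (φ : SchwartzMap D ℂ) {h : D → ℂ}
    (hh : AEStronglyMeasurable h μ) {k : ℕ} {C : ℝ} (hC : ∀ x, ‖h x‖ ≤ C * ‖x‖ ^ k) :
    Integrable (fun x => φ x * h x) μ := by
  refine ((φ.integrable_pow_mul μ k).const_mul C).mono'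
    (φ.continuous.aestronglyMeasurable.mul hh) (ae_of_all _ fun x => ?_)
  rw [norm_mul, mul_comm, ← mul_assoc]
  exact mul_le_mul_of_nonneg_right (hC x) (norm_nonneg _)

section Lizorkin

open MvPolynomial

variable {n : ℕ}

lemma eval_coord_monomial (x : En n) (d : Fin n →₀ ℕ) (a : ℂ) :
    eval (fun i => (x i : ℂ)) (monomial d a) = a * ∏ i, (x i : ℂ) ^ d i := by
  simp [eval_monomial, Finsupp.prod_fintype]

lemma norm_prod_coord_pow_le (x : En n) (d : Fin n → ℕ) :
    ‖∏ i, (x i : ℂ) ^ d i‖ ≤ ‖x‖ ^ ∑ i, d i := by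
  rw [norm_prod, ← Finset.prod_pow_eq_pow_sum]
  refine Finset.prod_le_prod (fun i _ => norm_nonneg _) fun i _ => ?_
  rw [norm_pow, Complex.norm_real]
  exact pow_le_pow_left₀ (norm_nonneg _) (PiLp.norm_apply_le x i) _

lemma SchwartzMap.integrable_mul_eval_coord (φ : SchwartzMap (En n) ℂ)
    (q : MvPolynomial (Fin n) ℂ) :
    Integrable (fun x => φ x * eval (fun i => (x i : ℂ)) q) := by
  rw [q.as_sum]
  simp only [map_sum, Finset.mul_sum]
  refine integrable_finsetSum _ fun d _ => ?_
  simp only [eval_coord_monomial]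
  refine φ.integrable_mul_of_norm_le_pow (by fun_prop) (k := ∑ i, d i) (C := ‖coeff d q‖)
    fun x => ?_
  rw [norm_mul]
  exact mul_le_mul_of_nonneg_left (norm_prod_coord_pow_le x d) (norm_nonneg _)

lemma LizorkinN.integral_mul_eval_coord_eq_zero {φ : SchwartzMap (En n) ℂ}
    (hφ : LizorkinN φ) (q : MvPolynomial (Fin n) ℂ) :
    ∫ x, φ x * eval (fun i => (x i : ℂ)) q = 0 := by
  rw [q.as_sum]
  simp only [map_sum, Finset.mul_sum]
  rw [integral_finsetSum _ fun d _ => φ.integrable_mul_eval_coord _]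
  refine Finset.sum_eq_zero fun d _ => ?_
  have hcomm : ∀ x : En n, φ x * (coeff d q * ∏ i, (x i : ℂ) ^ d i) =
      coeff d q * ((∏ i, (x i : ℂ) ^ d i) * φ x) := fun x => by ring
  simp_rw [eval_coord_monomial, hcomm, integral_const_mul, hφ d, mul_zero]

lemma exists_eval_coord_eq_taylorWithinEval_add_inner (g : ℝ → ℂ) (m : ℕ) (s : Set ℝ)
    (c : ℝ) (v : En n) : ∃ q : MvPolynomial (Fin n) ℂ, ∀ x : En n,
      taylorWithinEval g m s c (c + inner ℝ x v) = eval (fun i => (x i : ℂ)) q := by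
  refine ⟨∑ k ∈ Finset.range (m + 1), C ((k.factorial : ℂ)⁻¹ * iteratedDerivWithin k g s c) *
    (∑ i, C (v i : ℂ) * X i) ^ k, fun x => ?_⟩
  simp [taylor_within_apply, PiLp.inner_apply, Complex.real_smul, mul_comm, mul_assoc]

theorem LizorkinN.norm_integral_mul_comp_inner_le {φ : SchwartzMap (En n) ℂ}
    (hφ : LizorkinN φ) {m : ℕ} {g : ℝ → ℂ} (hg : ContDiff ℝ m g) {M : ℝ}
    (hM : ∀ y, ‖iteratedDeriv m g y‖ ≤ M) (c : ℝ) (v : En n) :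
    ‖∫ x, φ x * g (c + inner ℝ x v)‖ ≤ 2 * M * ‖v‖ ^ m * ∫ x, ‖x‖ ^ m * ‖φ x‖ := by
  obtain ⟨q, hq⟩ := exists_eval_coord_eq_taylorWithinEval_add_inner g m univ c v
  set T : En n → ℂ := fun x => taylorWithinEval g m univ c (c + inner ℝ x v)
  have hrem : ∀ x, ‖g (c + inner ℝ x v) - T x‖ ≤ 2 * M * ‖v‖ ^ m * ‖x‖ ^ m := fun x => by
    have hM0 : 0 ≤ M := (norm_nonneg _).trans (hM 0)
    calc ‖g (c + inner ℝ x v) - T x‖ ≤ 2 * M * |inner ℝ x v| ^ m := by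
          simpa using norm_sub_taylorWithinEval_le hg hM c (c + inner ℝ x v)
      _ ≤ 2 * M * (‖x‖ * ‖v‖) ^ m := by gcongr; exact abs_real_inner_le_norm x v
      _ = 2 * M * ‖v‖ ^ m * ‖x‖ ^ m := by ring
  have hTcont : Continuous T := by
    simp_rw [T, hq]
    exact (continuous_eval q).comp (by fun_prop)
  have hTint : Integrable fun x => φ x * T x := by
    simpa only [T, hq] using φ.integrable_mul_eval_coord q
  have hTzero : ∫ x, φ x * T x = 0 := by
    simpa only [T, hq] using hφ.integral_mul_eval_coord_eq_zero q
  have hremint : Integrable fun x => φ x * (g (c + inner ℝ x v) - T x) :=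
    φ.integrable_mul_of_norm_le_pow
      ((hg.continuous.comp (by fun_prop)).sub hTcont).aestronglyMeasurable hrem
  calc ‖∫ x, φ x * g (c + inner ℝ x v)‖
      = ‖∫ x, φ x * (g (c + inner ℝ x v) - T x) + φ x * T x‖ := by
        simp_rw [← mul_add, sub_add_cancel]
    _ = ‖∫ x, φ x * (g (c + inner ℝ x v) - T x)‖ := by
        rw [integral_add hremint hTint, hTzero, add_zero]
    _ ≤ ∫ x, 2 * M * ‖v‖ ^ m * (‖x‖ ^ m * ‖φ x‖) := by
        refine norm_integral_le_of_norm_le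
          ((φ.integrable_pow_mul volume m).const_mul _) (ae_of_all _ fun x => ?_)
        rw [norm_mul, mul_comm, ← mul_assoc]
        exact mul_le_mul_of_nonneg_right (hrem x) (norm_nonneg _)
    _ = 2 * M * ‖v‖ ^ m * ∫ x, ‖x‖ ^ m * ‖φ x‖ := integral_const_mul _ _

end Lizorkin

lemma RT_eq_inv_mul_integral {n : ℕ} (ψ : ℝ → ℂ) (f : En n → ℂ) (u : Sph n) (b a : ℝ) :
    RT ψ f u b a = (a : ℂ)⁻¹ * ∫ x, f x * conj (ψ (-b / a + inner ℝ x (a⁻¹ • (u : En n)))) := by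
  rw [RT, ← integral_const_mul]
  congr 1 with x
  rw [inner_smul_right, show -b / a + a⁻¹ * inner ℝ x (u : En n) = (inner ℝ x u - b) / a by ring,
    ridgelet, map_mul, map_inv₀, Complex.conj_ofReal]
  ring

lemma integral_pow_mul_norm_le_rho {E : Type*} [NormedAddCommGroup E] [NormedSpace ℝ E]
    [FiniteDimensional ℝ E] [MeasurableSpace E] [BorelSpace E] {μ : Measure E}
    [μ.IsAddHaarMeasure] {k : ℕ} (hk : Module.finrank ℝ E < k) (m : ℕ) (φ : SchwartzMap E ℂ) :
    ∫ x, ‖x‖ ^ m * ‖φ x‖ ∂μ ≤ rho (m + k) φ * ∫ x, (1 + ‖x‖) ^ (-(k : ℝ)) ∂μ := by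
  rw [← integral_const_mul]
  exact integral_mono (φ.integrable_pow_mul μ m)
    ((integrable_one_add_norm (by exact_mod_cast hk)).const_mul _) (pow_mul_norm_le_rho m φ)

lemma norm_iteratedDeriv_conj_le_rho {ν k : ℕ} (hk : k ≤ ν) (ψ : SchwartzMap ℝ ℂ) (y : ℝ) :
    ‖iteratedDeriv k (fun t => conj (ψ t)) y‖ ≤ rho ν ψ := by
  rw [← norm_iteratedFDeriv_eq_norm_iteratedDeriv]
  exact (Complex.conjLIE.norm_iteratedFDeriv_comp_left ψ y k).trans_le
    (norm_iteratedFDeriv_le_rho hk ψ y)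

lemma LizorkinN.pow_mul_norm_RT_le {n : ℕ} {φ : SchwartzMap (En n) ℂ} (hφ : LizorkinN φ)
    (ψ : SchwartzMap ℝ ℂ) {m : ℕ} {M : ℝ}
    (hM : ∀ y, ‖iteratedDeriv m (fun t => conj (ψ t)) y‖ ≤ M) (u : Sph n) (b : ℝ) {a : ℝ}
    (ha : 0 < a) : a ^ (m + 1) * ‖RT ψ φ u b a‖ ≤ 2 * M * ∫ x, ‖x‖ ^ m * ‖φ x‖ := by
  have hconj : ContDiff ℝ m fun t => conj (ψ t) :=
    Complex.conjCLE.contDiff.comp ((ψ.smooth ⊤).of_le (mod_cast le_top))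
  have hv : ‖a⁻¹ • (u : En n)‖ = a⁻¹ := by
    rw [norm_smul, norm_inv, Real.norm_of_nonneg ha.le, norm_eq_of_mem_sphere u, mul_one]
  rw [RT_eq_inv_mul_integral, norm_mul, norm_inv, Complex.norm_real, Real.norm_of_nonneg ha.le]
  calc a ^ (m + 1) * (a⁻¹ * ‖∫ x, φ x * conj (ψ (-b / a + inner ℝ x (a⁻¹ • (u : En n))))‖)
      ≤ a ^ (m + 1) * (a⁻¹ * (2 * M * ‖a⁻¹ • (u : En n)‖ ^ m * ∫ x, ‖x‖ ^ m * ‖φ x‖)) := by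
        gcongr
        exact hφ.norm_integral_mul_comp_inner_le hconj hM _ _
    _ = 2 * M * ∫ x, ‖x‖ ^ m * ‖φ x‖ := by
        rw [hv, inv_pow, pow_succ]
        field_simp

theorem ridgelet_large_scale_estimate_general
    (n : ℕ) (s : ℕ) (hs : 1 ≤ s) :
    ∃ C : ℝ, 0 < C ∧
      ∀ (φ : SchwartzMap (En n) ℂ), LizorkinN ⇑φ →
      ∀ (ψ : SchwartzMap ℝ ℂ) (u : Sph n) (b a : ℝ), 0 < a →
        a ^ s * ‖RT ⇑ψ ⇑φ u b a‖ ≤ C * rho (s + n) ⇑φ * rho (s + 1) ⇑ψ := by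
  obtain ⟨m, rfl⟩ := Nat.exists_eq_add_of_le' hs
  have hdim : Module.finrank ℝ (En n) < n + 1 := by simp
  set I := ∫ x : En n, (1 + ‖x‖) ^ (-((n + 1 : ℕ) : ℝ))
  have hpos : ∀ x : En n, 0 < 1 + ‖x‖ := fun x => by positivity
  have hI : 0 < I := integral_pos_of_integrable_nonneg_nonzero (x := 0)
    ((continuous_const.add continuous_norm).rpow_const fun x => Or.inl (hpos x).ne')
    (integrable_one_add_norm (by exact_mod_cast hdim))
    (fun x => Real.rpow_nonneg (hpos x).le _) (by simp)
  refine ⟨2 * I, by positivity, fun φ hφ ψ u b a ha => ?_⟩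
  calc a ^ (m + 1) * ‖RT ψ φ u b a‖ ≤ 2 * rho (m + 1 + 1) ψ * ∫ x, ‖x‖ ^ m * ‖φ x‖ :=
        hφ.pow_mul_norm_RT_le ψ (norm_iteratedDeriv_conj_le_rho (by omega) ψ) u b ha
    _ ≤ 2 * rho (m + 1 + 1) ψ * (rho (m + (n + 1)) φ * I) := by
        have := rho_nonneg (m + 1 + 1) ψ
        gcongr
        exact integral_pow_mul_norm_le_rho hdim m φ
    _ = 2 * I * rho (m + 1 + n) φ * rho (m + 1 + 1) ψ := by
        rw [show m + (n + 1) = m + 1 + n by ring]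
        ring

/-- for s ≥ 1 there is C > 0 with
a^s |R_ψφ(u,b,a)| ≤ C ρ_{s+n}(φ) ρ_{s+1}(ψ) for φ ∈ 𝓢₀(ℝⁿ) and ψ ∈ 𝓢(ℝ). -/
theorem ridgelet_large_scale_estimate
    (n : ℕ) (hn : 2 ≤ n) (s : ℕ) (hs : 1 ≤ s) :
    ∃ C : ℝ, 0 < C ∧
      ∀ (φ : SchwartzMap (En n) ℂ), LizorkinN ⇑φ →
      ∀ (ψ : SchwartzMap ℝ ℂ) (u : Sph n) (b a : ℝ), 0 < a →
        a ^ s * ‖RT ⇑ψ ⇑φ u b a‖ ≤ C * rho (s + n) ⇑φ * rho (s + 1) ⇑ψ :=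
  ridgelet_large_scale_estimate_general n s hs
end
end

section
/- Let ψ ∈ 𝓢(ℝ) and φ ∈ 𝓢(ℝⁿ). Then the function (u,b,a) ↦ R_ψ φ(u,b,a) is infinitely differentiable (smooth) on 𝕊^{n-1}×ℝ×(0,∞), where 𝕊^{n-1} carries its standard smooth manifold structure and the product carries the product smooth structure. -/
open MeasureTheory Metric Filter Set
open scoped Real ComplexConjugate Manifold

noncomputable section

/-! With `G(v, c) = ∫ conj ψ(⟪x, v⟫ + c) φ(x) dx` (`ridgeletProfile`) one has
`R_ψ φ(u, b, a) = a⁻¹ G(u / a, -b / a)`, so it suffices that `G` is smooth on `ℝⁿ × ℝ`.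
Differentiating `k` times under the integral sign gives `conj ψ⁽ᵏ⁾(⟪x, v⟫ + c)` against a tensor
of size `O((1 + ‖x‖)ᵏ) |φ(x)|`; since `ψ⁽ᵏ⁾` is bounded and `φ` decays rapidly, this is dominated
by an integrable function. -/

open scoped ContDiff SchwartzMap

universe u

section ParametricIntegral

variable {X : Type*} [TopologicalSpace X] [MeasurableSpace X] [OpensMeasurableSpace X]
  [SecondCountableTopology X] {μ : Measure X}
  {W : Type u} [NormedAddCommGroup W] [NormedSpace ℝ W]

lemma hasFDerivAt_comp_clm_smul_const {F : Type*} [NormedAddCommGroup F] [NormedSpace ℂ F]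
    {χ : ℝ → ℂ} {c : ℂ} (g : W →L[ℝ] ℝ) (v : F) {w : W} (hχ : HasDerivAt χ c (g w)) :
    HasFDerivAt (fun w => χ (g w) • v) (c • g.smulRight v) w := by
  refine ((hχ.hasFDerivAt.comp w g.hasFDerivAt).smul_const v).congr_fderiv ?_
  ext h
  simp [mul_smul, Complex.coe_smul, smul_comm c]

lemma continuous_integral_comp_clm_smul {F : Type*} [NormedAddCommGroup F] [NormedSpace ℂ F]
    {χ : ℝ → ℂ} {C : ℝ} (hχ : Continuous χ) (hχC : ∀ t, ‖χ t‖ ≤ C)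
    {g : X → W →L[ℝ] ℝ} {f : X → F} (hg : Continuous g) (hf : Continuous f)
    (hfi : Integrable (fun x => ‖f x‖) μ) :
    Continuous fun w => ∫ x, χ (g x w) • f x ∂μ := by
  refine continuous_of_dominated (bound := fun x => C * ‖f x‖)
    (fun w => ?_) (fun w => .of_forall fun x => ?_) (hfi.const_mul C)
    (.of_forall fun x => (hχ.comp (g x).continuous).smul continuous_const)
  · exact ((hχ.comp ((ContinuousLinearMap.apply ℝ ℝ w).continuous.comp hg)).smul hf)
      |>.aestronglyMeasurable
  · rw [norm_smul]
    exact mul_le_mul_of_nonneg_right (hχC _) (norm_nonneg _)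

lemma hasFDerivAt_integral_comp_clm_smul {F : Type*} [NormedAddCommGroup F] [NormedSpace ℂ F]
    {χ : ℝ → ℂ} {C₀ C₁ : ℝ} (hχ : Differentiable ℝ χ) (hχ' : Continuous (deriv χ))
    (hχC : ∀ t, ‖χ t‖ ≤ C₀) (hχ'C : ∀ t, ‖deriv χ t‖ ≤ C₁)
    {g : X → W →L[ℝ] ℝ} {f : X → F} (hg : Continuous g) (hf : Continuous f)
    (hfi : Integrable (fun x => ‖f x‖) μ) (hgfi : Integrable (fun x => ‖g x‖ * ‖f x‖) μ)
    (w : W) :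
    HasFDerivAt (fun w => ∫ x, χ (g x w) • f x ∂μ)
      (∫ x, deriv χ (g x w) • (g x).smulRight (f x) ∂μ) w := by
  have hgw (w : W) : Continuous fun x => g x w :=
    (ContinuousLinearMap.apply ℝ ℝ w).continuous.comp hg
  refine hasFDerivAt_integral_of_dominated_of_fderiv_le
    (bound := fun x => C₁ * (‖g x‖ * ‖f x‖)) univ_mem
    (.of_forall fun w => ((hχ.continuous.comp (hgw w)).smul hf).aestronglyMeasurable) ?_
    ((hχ'.comp (hgw w)).smul
      (isBoundedBilinearMap_smulRight.continuous.comp (hg.prodMk hf))).aestronglyMeasurable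
    (.of_forall fun x w _ => ?_) (hgfi.const_mul C₁)
    (.of_forall fun x w _ => hasFDerivAt_comp_clm_smul_const (g x) (f x) (hχ _).hasDerivAt)
  · refine (hfi.const_mul C₀).mono'
      ((hχ.continuous.comp (hgw w)).smul hf).aestronglyMeasurable (.of_forall fun x => ?_)
    exact (norm_smul _ (f x)).trans_le (mul_le_mul_of_nonneg_right (hχC _) (norm_nonneg _))
  · rw [norm_smul, ContinuousLinearMap.norm_smulRight_apply]
    exact mul_le_mul_of_nonneg_right (hχ'C _) (by positivity)

theorem contDiff_integral_comp_clm_smul {F : Type u} [NormedAddCommGroup F] [NormedSpace ℂ F]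
    {χ : ℝ → ℂ} (hχ : ContDiff ℝ ∞ χ) (hχC : ∀ k, ∃ C, ∀ t, ‖iteratedDeriv k χ t‖ ≤ C)
    {g : X → W →L[ℝ] ℝ} {f : X → F} (hg : Continuous g) (hf : Continuous f)
    (hfi : ∀ k : ℕ, Integrable (fun x => ‖g x‖ ^ k * ‖f x‖) μ) :
    ContDiff ℝ ∞ fun w => ∫ x, χ (g x w) • f x ∂μ := by
  refine contDiff_infty.2 fun N => ?_
  -- The derivative is an integral of the same shape, with `deriv χ` in place of `χ` and
  -- `x ↦ (g x).smulRight (f x)` in place of `f`.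
  induction N generalizing F χ f with
  | zero =>
    obtain ⟨C, hC⟩ := hχC 0
    exact contDiff_zero.2 <| continuous_integral_comp_clm_smul hχ.continuous
      (by simpa using hC) hg hf (by simpa using hfi 0)
  | succ N ih =>
    obtain ⟨C₀, hC₀⟩ := hχC 0
    obtain ⟨C₁, hC₁⟩ := hχC 1
    have hderiv := hasFDerivAt_integral_comp_clm_smul (μ := μ) (hχ.differentiable (by simp))
      (hχ.continuous_deriv (by simp)) (by simpa using hC₀) (by simpa using hC₁) hg hf
      (by simpa using hfi 0) (by simpa using hfi 1)
    rw [Nat.cast_succ]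
    refine contDiff_succ_iff_fderiv.2
      ⟨fun w => (hderiv w).differentiableAt, fun h => absurd h (by simp), ?_⟩
    rw [funext fun w => (hderiv w).fderiv]
    refine ih (hχ.iterate_deriv 1) (fun k => ?_)
      (isBoundedBilinearMap_smulRight.continuous.comp (hg.prodMk hf)) (fun k => ?_)
    · simpa [← iteratedDeriv_succ'] using hχC (k + 1)
    · simpa [ContinuousLinearMap.norm_smulRight_apply, pow_succ, mul_assoc] using hfi (k + 1)

end ParametricIntegral

lemma SchwartzMap.exists_norm_iteratedDeriv_le {F : Type*} [NormedAddCommGroup F]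
    [NormedSpace ℝ F] (χ : 𝓢(ℝ, F)) (k : ℕ) : ∃ C, ∀ t, ‖iteratedDeriv k χ t‖ ≤ C :=
  ⟨SchwartzMap.seminorm ℝ 0 k χ, fun t => by
    simpa [norm_iteratedFDeriv_eq_norm_iteratedDeriv] using
      χ.norm_iteratedFDeriv_le_seminorm ℝ k t⟩

lemma SchwartzMap.integrable_norm_pow_mul_of_norm_le {E V G : Type*} [NormedAddCommGroup E]
    [NormedSpace ℝ E] [MeasurableSpace E] [BorelSpace E] [SecondCountableTopology E]
    [NormedAddCommGroup V] [NormedSpace ℝ V] [NormedAddCommGroup G]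
    (μ : Measure E) [μ.HasTemperateGrowth] (φ : 𝓢(E, V)) {g : E → G}
    (hg : Continuous g) (hgle : ∀ x, ‖g x‖ ≤ ‖x‖ + 1) (k : ℕ) :
    Integrable (fun x => ‖g x‖ ^ k * ‖φ x‖) μ := by
  refine (((φ.integrable_pow_mul μ k).add (φ.integrable_pow_mul μ 0)).const_mul
    (2 ^ (k - 1))).mono' ((hg.norm.pow k).mul φ.continuous.norm).aestronglyMeasurable
    (.of_forall fun x => ?_)
  calc ‖‖g x‖ ^ k * ‖φ x‖‖ = ‖g x‖ ^ k * ‖φ x‖ := by simp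
    _ ≤ (‖x‖ + 1) ^ k * ‖φ x‖ := by gcongr; exact hgle x
    _ ≤ 2 ^ (k - 1) * (‖x‖ ^ k + 1 ^ k) * ‖φ x‖ := by
      gcongr; exact add_pow_le (norm_nonneg x) zero_le_one k
    _ = 2 ^ (k - 1) * (‖x‖ ^ k * ‖φ x‖ + ‖x‖ ^ 0 * ‖φ x‖) := by ring

section Ridge

variable {E : Type u} [NormedAddCommGroup E] [InnerProductSpace ℝ E]

def ridgeFunctional (x : E) : E × ℝ →L[ℝ] ℝ :=
  (innerSL ℝ x).comp (ContinuousLinearMap.fst ℝ E ℝ) + ContinuousLinearMap.snd ℝ E ℝ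

@[simp]
lemma ridgeFunctional_apply (x v : E) (c : ℝ) :
    ridgeFunctional x (v, c) = inner ℝ x v + c :=
  rfl

lemma continuous_ridgeFunctional : Continuous (ridgeFunctional (E := E)) :=
  (((ContinuousLinearMap.compL ℝ (E × ℝ) E ℝ).flip
    (ContinuousLinearMap.fst ℝ E ℝ)).continuous.comp (innerSL ℝ (E := E)).continuous).add
    continuous_const

lemma norm_ridgeFunctional_le (x : E) : ‖ridgeFunctional x‖ ≤ ‖x‖ + 1 := by
  calc ‖ridgeFunctional x‖
      ≤ ‖(innerSL ℝ x).comp (ContinuousLinearMap.fst ℝ E ℝ)‖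
          + ‖ContinuousLinearMap.snd ℝ E ℝ‖ :=
        norm_add_le ((innerSL ℝ x).comp (ContinuousLinearMap.fst ℝ E ℝ)) _
    _ ≤ ‖innerSL ℝ x‖ * ‖ContinuousLinearMap.fst ℝ E ℝ‖ + ‖ContinuousLinearMap.snd ℝ E ℝ‖ := by
      gcongr
      exact ContinuousLinearMap.opNorm_comp_le _ _
    _ ≤ ‖x‖ * 1 + 1 := by
      gcongr
      · rw [innerSL_apply_norm]
      · exact ContinuousLinearMap.norm_fst_le ..
      · exact ContinuousLinearMap.norm_snd_le ..
    _ = ‖x‖ + 1 := by rw [mul_one]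

def ridgeletProfile [MeasureSpace E] {V : Type*} [NormedAddCommGroup V] [NormedSpace ℂ V]
    (χ : ℝ → ℂ) (φ : E → V) (w : E × ℝ) : V :=
  ∫ x, χ (ridgeFunctional x w) • φ x

theorem contDiff_ridgeletProfile [MeasureSpace E] [BorelSpace E] [SecondCountableTopology E]
    [(volume : Measure E).HasTemperateGrowth] {V : Type u} [NormedAddCommGroup V]
    [NormedSpace ℂ V] (χ : 𝓢(ℝ, ℂ)) (φ : 𝓢(E, V)) : ContDiff ℝ ∞ (ridgeletProfile χ φ) :=
  contDiff_integral_comp_clm_smul (χ.smooth ⊤) χ.exists_norm_iteratedDeriv_le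
    continuous_ridgeFunctional φ.continuous fun k =>
      φ.integrable_norm_pow_mul_of_norm_le volume continuous_ridgeFunctional
        norm_ridgeFunctional_le k

end Ridge

lemma RT_eq_ridgeletProfile {n : ℕ} (ψ : ℝ → ℂ) (f : En n → ℂ) (u : Sph n) (b : ℝ) {a : ℝ}
    (ha : a ≠ 0) :
    RT ψ f u b a =
      (a : ℂ)⁻¹ * ridgeletProfile (fun t => conj (ψ t)) f (a⁻¹ • (u : En n), -(b / a)) := by
  rw [RT, ridgeletProfile, ← integral_const_mul]
  congr 1 with x
  simp only [ridgelet, ridgeFunctional_apply, real_inner_smul_right, map_mul, map_inv₀,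
    Complex.conj_ofReal, smul_eq_mul]
  rw [show a⁻¹ * inner ℝ x (u : En n) + -(b / a) = (inner ℝ x (u : En n) - b) / a by
    field_simp; ring]
  ring

theorem ridgelet_transform_smooth_general
    (m : ℕ)
    [Fact (Module.finrank ℝ (En (m + 1)) = m + 1)]
    (ψ : SchwartzMap ℝ ℂ) (φ : SchwartzMap (En (m + 1)) ℂ) :
    ContMDiffOn ((𝓡 m).prod (𝓘(ℝ, ℝ × ℝ))) 𝓘(ℝ, ℂ) (⊤ : ℕ∞)
      (fun q : Sph (m + 1) × ℝ × ℝ => RT ⇑ψ ⇑φ q.1 q.2.1 q.2.2)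
      (univ ×ˢ univ ×ˢ Ioi (0:ℝ)) := by
  set χ : 𝓢(ℝ, ℂ) := ψ.postcompCLM (Complex.conjCLE : ℂ →L[ℝ] ℂ)
  have ha : ∀ p ∈ (univ ×ˢ univ ×ˢ Ioi 0 : Set (En (m + 1) × ℝ × ℝ)), p.2.2 ≠ 0 :=
    fun p hp => hp.2.2.ne'
  have hsmooth : ContDiffOn ℝ ∞ (fun p : En (m + 1) × ℝ × ℝ =>
      (p.2.2 : ℂ)⁻¹ * ridgeletProfile χ φ (p.2.2⁻¹ • p.1, -(p.2.1 / p.2.2)))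
      (univ ×ˢ univ ×ˢ Ioi 0) := by
    refine ContDiffOn.mul ?_ ((contDiff_ridgeletProfile χ φ).comp_contDiffOn ?_)
    · exact (Complex.ofRealCLM.contDiff.comp (contDiff_snd.comp contDiff_snd)).contDiffOn.inv
        fun p hp => by simpa using ha p hp
    · exact ((contDiff_snd.comp contDiff_snd).contDiffOn.inv ha).smul contDiffOn_fst |>.prodMk
        ((contDiff_fst.comp contDiff_snd).contDiffOn.div
          (contDiff_snd.comp contDiff_snd).contDiffOn ha).neg
  have hincl : ContMDiff ((𝓡 m).prod 𝓘(ℝ, ℝ × ℝ)) 𝓘(ℝ, En (m + 1) × ℝ × ℝ) ∞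
      (fun q : Sph (m + 1) × ℝ × ℝ => ((q.1 : En (m + 1)), q.2)) :=
    (contMDiff_coe_sphere.comp contMDiff_fst).prodMk_space contMDiff_snd
  refine (hsmooth.contMDiffOn.comp hincl.contMDiffOn
    fun q hq => ⟨trivial, trivial, hq.2.2⟩).congr fun q hq => ?_
  exact RT_eq_ridgeletProfile _ _ _ _ hq.2.2.ne'

/-- for ψ ∈ 𝓢(ℝ) and φ ∈ 𝓢(ℝⁿ) (with n = m+1 ≥ 2), the ridgelet transform
(u,b,a) ↦ R_ψφ(u,b,a) is smooth on the manifold 𝕊^{n-1}×ℝ×(0,∞). -/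
theorem ridgelet_transform_smooth
    (m : ℕ) (hm : 2 ≤ m + 1)
    [Fact (Module.finrank ℝ (En (m + 1)) = m + 1)]
    (ψ : SchwartzMap ℝ ℂ) (φ : SchwartzMap (En (m + 1)) ℂ) :
    ContMDiffOn ((𝓡 m).prod (𝓘(ℝ, ℝ × ℝ))) 𝓘(ℝ, ℂ) (⊤ : ℕ∞)
      (fun q : Sph (m + 1) × ℝ × ℝ => RT ⇑ψ ⇑φ q.1 q.2.1 q.2.2)
      (univ ×ˢ univ ×ˢ Ioi (0:ℝ)) :=
  ridgelet_transform_smooth_general m ψ φ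
end
end

section
/- Let f ∈ 𝓢(ℝⁿ), ψ ∈ 𝓢(ℝ), and let α be a multi-index. Then for every (u,b,a) ∈ 𝕊^{n-1}×ℝ×(0,∞), the ridgelet transform intertwines differentiation as follows: R_ψ(∂^α f)(u,b,a) = (−1)^{|α|} u^α a^{−|α|} R_{ψ^{(|α|)}} f(u,b,a), where ψ^{(|α|)} is the |α|-th derivative of ψ and u^α = u₁^{α₁}⋯u_n^{α_n}. -/
open MeasureTheory Metric Filter Set
open scoped Real ComplexConjugate Manifold

noncomputable section

/-- Partial derivative in the i-th coordinate direction. -/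
def pderiv1 {n : ℕ} (i : Fin n) (f : En n → ℂ) : En n → ℂ :=
  fun x => fderiv ℝ f x (EuclideanSpace.single i (1 : ℝ))

/-- Multi-index partial derivative ∂^α = ∂₁^{α₁} ⋯ ∂ₙ^{αₙ}. -/
def mderiv {n : ℕ} (α : Fin n → ℕ) (f : En n → ℂ) : En n → ℂ :=
  (List.finRange n).foldr (fun i g => (pderiv1 i)^[α i] g) f


/-!
Differentiating `f` along `v` and integrating by parts moves the derivative onto the ridge
function `x ↦ conj ψ_{b,a}(x·u)`, where `ψ_{b,a}(t) = a⁻¹ ψ((t - b)/a)`. By the chain rule its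
derivative along `v` is `(v·u)/a` times the ridge function built from `ψ'` in place of `ψ`.
Integration by parts is legitimate because `f` is Schwartz and ridge functions of Schwartz
profiles are bounded and continuous, though in general not integrable. Iterating along the
coordinate directions `e_i`, for which `e_i·u = u_i`, produces the factor `∏ᵢ (-u_i/a)^{α_i}`.
-/

open LineDeriv SchwartzMap
open scoped RealInnerProductSpace

section RidgeIntegrationByParts

variable {E : Type*} [NormedAddCommGroup E] [InnerProductSpace ℝ E] [FiniteDimensional ℝ E]
  [MeasurableSpace E] [BorelSpace E] {μ : Measure E} [μ.IsAddHaarMeasure]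

theorem integral_lineDerivOp_mul_comp_inner (f : 𝓢(E, ℂ)) {φ φ' : ℝ → ℂ}
    (hφ : ∀ t, HasDerivAt φ (φ' t) t) (hφ' : Continuous φ') {C C' : ℝ}
    (hφC : ∀ t, ‖φ t‖ ≤ C) (hφ'C : ∀ t, ‖φ' t‖ ≤ C') (v w : E) :
    ∫ x, ∂_{v} f x * φ ⟪x, w⟫ ∂μ = -(⟪v, w⟫ : ℂ) * ∫ x, f x * φ' ⟪x, w⟫ ∂μ := by
  have hinner : Continuous fun x : E => ⟪x, w⟫ := continuous_id.inner continuous_const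
  have hridge : ∀ x, HasFDerivAt (fun y => φ ⟪y, w⟫)
      ((ContinuousLinearMap.smulRight (1 : ℝ →L[ℝ] ℝ) (φ' ⟪x, w⟫)).comp (innerSL ℝ w)) x := by
    intro x
    have : HasFDerivAt (fun y : E => ⟪y, w⟫) (innerSL ℝ w) x :=
      (innerSL ℝ w).hasFDerivAt.congr_of_eventuallyEq (.of_forall fun y => real_inner_comm _ _)
    exact (hφ _).hasFDerivAt.comp x this
  have hridge_v : ∀ x, fderiv ℝ (fun y => φ ⟪y, w⟫) x v = ⟪v, w⟫ * φ' ⟪x, w⟫ := by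
    intro x
    rw [(hridge x).fderiv]
    simp [real_inner_comm w]
  have hφcont : Continuous φ := continuous_iff_continuousAt.2 fun t => (hφ t).continuousAt
  have hintegrable : ∀ g : 𝓢(E, ℂ), ∀ {χ : ℝ → ℂ} {K : ℝ}, Continuous χ → (∀ t, ‖χ t‖ ≤ K) →
      Integrable (fun x => g x * χ ⟪x, w⟫) μ := fun g χ K hχ hχK =>
    g.integrable.mul_bdd (hχ.comp hinner).aestronglyMeasurable (ae_of_all _ fun x => hχK _)
  have hibp := integral_mul_fderiv_eq_neg_fderiv_mul_of_integrable (μ := μ) (v := v)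
    (hintegrable (∂_{v} f) hφcont hφC)
    (by simpa only [hridge_v, mul_left_comm] using (hintegrable f hφ' hφ'C).const_mul (⟪v, w⟫ : ℂ))
    (hintegrable f hφcont hφC) (fun x _ => f.differentiableAt)
    (fun x _ => (hridge x).differentiableAt)
  simp only [hridge_v, mul_left_comm _ (⟪v, w⟫ : ℂ), integral_const_mul] at hibp
  simp only [lineDerivOp_apply_eq_fderiv, hibp, neg_mul, neg_neg]

end RidgeIntegrationByParts

theorem coe_lineDerivOp_iterate {E F : Type*} [NormedAddCommGroup E] [NormedSpace ℝ E]
    [NormedAddCommGroup F] [NormedSpace ℝ F] (v : E) (k : ℕ) (f : 𝓢(E, F)) :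
    ⇑((∂_{v} : 𝓢(E, F) → 𝓢(E, F))^[k] f) = (fun g x => fderiv ℝ g x v)^[k] ⇑f := by
  have h : Function.Semiconj (fun g : 𝓢(E, F) => ⇑g) (∂_{v}) (fun g x => fderiv ℝ g x v) :=
    fun _ => rfl
  exact (h.iterate_right k).eq f

theorem coe_derivCLM_iterate {𝕜 F : Type*} [RCLike 𝕜] [NormedAddCommGroup F] [NormedSpace ℝ F]
    [NormedSpace 𝕜 F] (k : ℕ) (ψ : 𝓢(ℝ, F)) :
    ⇑((derivCLM 𝕜 F)^[k] ψ) = iteratedDeriv k ψ := by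
  have h : Function.Semiconj (fun g : 𝓢(ℝ, F) => ⇑g) (derivCLM 𝕜 F) deriv := fun _ => rfl
  rw [iteratedDeriv_eq_iterate]
  exact (h.iterate_right k).eq ψ

theorem coe_foldr_lineDerivOp_iterate {E F ι : Type*} [NormedAddCommGroup E] [NormedSpace ℝ E]
    [NormedAddCommGroup F] [NormedSpace ℝ F] (v : ι → E) (α : ι → ℕ) (l : List ι)
    (f : 𝓢(E, F)) :
    ⇑(l.foldr (fun i g => (∂_{v i} : 𝓢(E, F) → 𝓢(E, F))^[α i] g) f) =
      l.foldr (fun i g => (fun h x => fderiv ℝ h x (v i))^[α i] g) ⇑f := by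
  induction l with
  | nil => rfl
  | cons i l ih => rw [List.foldr_cons, List.foldr_cons, coe_lineDerivOp_iterate, ih]

theorem prod_neg_div_pow {ι : Type*} (s : Finset ι) (x : ι → ℝ) (a : ℝ) (α : ι → ℕ) :
    ∏ i ∈ s, (-((x i / a : ℝ) : ℂ)) ^ α i =
      (-1 : ℂ) ^ (∑ i ∈ s, α i) * (∏ i ∈ s, ((x i : ℝ) : ℂ) ^ α i) *
        ((a ^ ∑ i ∈ s, α i : ℝ) : ℂ)⁻¹ := by
  have hfactor : ∀ i, (-((x i / a : ℝ) : ℂ)) ^ α i =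
      (-1 : ℂ) ^ α i * ((x i : ℝ) : ℂ) ^ α i * ((a : ℂ) ^ α i)⁻¹ := fun i => by
    push_cast
    ring
  rw [Finset.prod_congr rfl fun i _ => hfactor i, Finset.prod_mul_distrib, Finset.prod_mul_distrib,
    Finset.prod_pow_eq_pow_sum, Finset.prod_inv_distrib, Finset.prod_pow_eq_pow_sum,
    Complex.ofReal_pow]

def waveletAtom (ψ : ℝ → ℂ) (b a t : ℝ) : ℂ := (a : ℂ)⁻¹ * ψ ((t - b) / a)

theorem ridgelet_eq_waveletAtom {n : ℕ} (ψ : ℝ → ℂ) (u : Sph n) (b a : ℝ) (x : En n) :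
    ridgelet ψ u b a x = waveletAtom ψ b a ⟪x, (u : En n)⟫ := rfl

theorem hasDerivAt_waveletAtom (η : 𝓢(ℝ, ℂ)) (b a t : ℝ) :
    HasDerivAt (waveletAtom η b a) (a⁻¹ • waveletAtom (derivCLM ℝ ℂ η) b a t) t := by
  have := ((hasDerivAt_id t).sub_const b).div_const a
  refine (((η.hasDerivAt _).scomp t this).const_mul (a : ℂ)⁻¹).congr_deriv ?_
  simp [waveletAtom, Complex.real_smul]

theorem norm_waveletAtom_le (η : 𝓢(ℝ, ℂ)) (b a t : ℝ) :
    ‖waveletAtom η b a t‖ ≤ |a|⁻¹ * SchwartzMap.seminorm ℝ 0 0 η := by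
  rw [waveletAtom, norm_mul, norm_inv, Complex.norm_real, Real.norm_eq_abs]
  exact mul_le_mul_of_nonneg_left (η.norm_le_seminorm ℝ _) (by positivity)

theorem continuous_waveletAtom (η : 𝓢(ℝ, ℂ)) (b a : ℝ) : Continuous (waveletAtom η b a) :=
  continuous_const.mul (η.continuous.comp ((continuous_id.sub continuous_const).div_const a))

theorem RT_lineDerivOp {n : ℕ} (ψ : 𝓢(ℝ, ℂ)) (f : 𝓢(En n, ℂ)) (v : En n) (u : Sph n)
    (b a : ℝ) :
    RT ψ ⇑(∂_{v} f : 𝓢(En n, ℂ)) u b a =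
      -((⟪v, (u : En n)⟫ / a : ℝ) : ℂ) * RT (derivCLM ℝ ℂ ψ) f u b a := by
  have hparts := integral_lineDerivOp_mul_comp_inner (μ := volume) f
    (φ := fun t => conj (waveletAtom ψ b a t))
    (φ' := fun t => a⁻¹ • conj (waveletAtom (derivCLM ℝ ℂ ψ) b a t))
    (fun t => by simpa using (hasDerivAt_waveletAtom ψ b a t).star)
    (by have := continuous_waveletAtom (derivCLM ℝ ℂ ψ) b a; fun_prop)
    (fun t => by rw [Complex.norm_conj]; exact norm_waveletAtom_le ψ b a t)
    (fun t => by
      rw [norm_smul, Complex.norm_conj, Real.norm_eq_abs, abs_inv]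
      exact mul_le_mul_of_nonneg_left (norm_waveletAtom_le _ b a t) (by positivity))
    v u
  simp only [RT, ridgelet_eq_waveletAtom, hparts, Complex.real_smul,
    mul_left_comm _ ((a⁻¹ : ℝ) : ℂ), integral_const_mul]
  push_cast
  ring

theorem RT_lineDerivOp_iterate {n : ℕ} (ψ : 𝓢(ℝ, ℂ)) (f : 𝓢(En n, ℂ)) (v : En n) (u : Sph n)
    (b a : ℝ) (k : ℕ) :
    RT ψ ⇑((∂_{v} : 𝓢(En n, ℂ) → 𝓢(En n, ℂ))^[k] f) u b a =
      (-((⟪v, (u : En n)⟫ / a : ℝ) : ℂ)) ^ k * RT ((derivCLM ℝ ℂ)^[k] ψ) f u b a := by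
  induction k generalizing f with
  | zero => simp
  | succ k ih =>
    rw [Function.iterate_succ_apply, ih, RT_lineDerivOp, Function.iterate_succ_apply', pow_succ,
      mul_assoc]

theorem RT_foldr_lineDerivOp_iterate {n : ℕ} {ι : Type*} (v : ι → En n) (α : ι → ℕ)
    (u : Sph n) (b a : ℝ) (l : List ι) (ψ : 𝓢(ℝ, ℂ)) (f : 𝓢(En n, ℂ)) :
    RT ψ ⇑(l.foldr (fun i g => (∂_{v i} : 𝓢(En n, ℂ) → 𝓢(En n, ℂ))^[α i] g) f) u b a =
      (l.map fun i => (-((⟪v i, (u : En n)⟫ / a : ℝ) : ℂ)) ^ α i).prod *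
        RT ((derivCLM ℝ ℂ)^[(l.map α).sum] ψ) f u b a := by
  induction l generalizing ψ with
  | nil => simp
  | cons i l ih =>
    rw [List.foldr_cons, RT_lineDerivOp_iterate, ih, ← Function.iterate_add_apply]
    simp only [List.map_cons, List.prod_cons, List.sum_cons, add_comm (α i), mul_assoc]

theorem ridgelet_of_derivative_general
    (n : ℕ) (f : SchwartzMap (En n) ℂ) (ψ : SchwartzMap ℝ ℂ)
    (α : Fin n → ℕ) :
    ∀ (u : Sph n) (b a : ℝ), 0 < a →
      RT ⇑ψ (mderiv α ⇑f) u b a =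
        (-1 : ℂ) ^ (∑ i, α i) * (∏ i, (((u : En n) i : ℝ) : ℂ) ^ α i) *
          ((a ^ (∑ i, α i) : ℝ) : ℂ)⁻¹ *
          RT (iteratedDeriv (∑ i, α i) ⇑ψ) ⇑f u b a := by
  intro u b a _
  have hmderiv : mderiv α ⇑f = ⇑((List.finRange n).foldr
      (fun i g => (∂_{EuclideanSpace.single i (1 : ℝ)} : 𝓢(En n, ℂ) → 𝓢(En n, ℂ))^[α i] g) f) :=
    (coe_foldr_lineDerivOp_iterate _ α _ f).symm
  rw [hmderiv, RT_foldr_lineDerivOp_iterate, coe_derivCLM_iterate, ← Fin.prod_univ_def,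
    ← Fin.sum_univ_def]
  simp only [EuclideanSpace.inner_single_left, map_one, one_mul, prod_neg_div_pow]

/-- the ridgelet transform intertwines differentiation:
R_ψ(∂^α f)(u,b,a) = (−1)^{|α|} u^α a^{−|α|} R_{ψ^{(|α|)}}f(u,b,a). -/
theorem ridgelet_of_derivative
    (n : ℕ) (hn : 2 ≤ n) (f : SchwartzMap (En n) ℂ) (ψ : SchwartzMap ℝ ℂ)
    (α : Fin n → ℕ) :
    ∀ (u : Sph n) (b a : ℝ), 0 < a →
      RT ⇑ψ (mderiv α ⇑f) u b a =
        (-1 : ℂ) ^ (∑ i, α i) * (∏ i, (((u : En n) i : ℝ) : ℂ) ^ α i) *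
          ((a ^ (∑ i, α i) : ℝ) : ℂ)⁻¹ *
          RT (iteratedDeriv (∑ i, α i) ⇑ψ) ⇑f u b a :=
  ridgelet_of_derivative_general n f ψ α
end
end
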